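/- Let V be a vector superspace with even non-degenerate supersymmetric form g and compatible complex structure J as in the Kähler super setting, u = { ξ ∈ osp(V,g) : [ξ,J] = 0 }, and su = { ξ ∈ u : str(J ∘ ξ) = 0 }. Then an even algebraic curvature tensor R ∈ R(u) takes values in su if and only if Ric(R) = 0, where Ric(R)(Y,Z) = str( X ↦ (−1)^{|X||Z|} R(Y,X)Z ). -/

import Mathlib

/-- A vector superspace structure on `V`: a pair of complementary subspaces. -/
structure SuperSpace (k V : Type*) [Field k] [AddCommGroup V] [Module k V] where
  even : Submodule k V
  odd : Submodule k V
  isCompl : IsCompl even odd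

variable {k V : Type*} [Field k] [AddCommGroup V] [Module k V]

/-- The subspace of elements of parity `p`. -/
def SuperSpace.part (S : SuperSpace k V) (p : ZMod 2) : Submodule k V :=
  if p = 0 then S.even else S.odd

/-- The sign `(-1)^p`. -/
def sg (k : Type*) [Field k] (p : ZMod 2) : k := if p = 1 then -1 else 1

/-- `A` is a homogeneous endomorphism of parity `p`. -/
def SuperSpace.HomEnd (S : SuperSpace k V) (p : ZMod 2) (A : Module.End k V) : Prop :=
  ∀ q x, x ∈ S.part q → A x ∈ S.part (q + p)

/-- Supercommutator of endomorphisms of parities `pa`, `pb`. -/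
def sbr (pa pb : ZMod 2) (A B : Module.End k V) : Module.End k V :=
  A * B - sg k (pa * pb) • (B * A)

/-- Super skew-symmetry of a bilinear map with operator values. -/
def SuperSkew (S : SuperSpace k V) (R : V →ₗ[k] V →ₗ[k] Module.End k V) : Prop :=
  ∀ p q x y, x ∈ S.part p → y ∈ S.part q → R x y = - sg k (p * q) • R y x

/-- The first Bianchi super-identity. -/
def Bianchi (S : SuperSpace k V) (R : V →ₗ[k] V →ₗ[k] Module.End k V) : Prop :=
  ∀ p q r x y z, x ∈ S.part p → y ∈ S.part q → z ∈ S.part r →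
    R x y z + sg k (p * (q + r)) • R y z x + sg k (r * (p + q)) • R z x y = 0

/-- `R` is an algebraic curvature tensor of type `g`. -/
def CurvOf (S : SuperSpace k V) (g : Submodule k (Module.End k V))
    (R : V →ₗ[k] V →ₗ[k] Module.End k V) : Prop :=
  (∀ x y, R x y ∈ g) ∧ SuperSkew S R ∧ Bianchi S R

/-- `R` is homogeneous of parity `pR`: `R x y` has parity `pR + |x| + |y|`. -/
def HomCurv (S : SuperSpace k V) (pR : ZMod 2)
    (R : V →ₗ[k] V →ₗ[k] Module.End k V) : Prop :=
  ∀ p q x y, x ∈ S.part p → y ∈ S.part q → S.HomEnd (pR + p + q) (R x y)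

/-- The supertrace of an endomorphism with respect to a superspace structure. -/
noncomputable def strE {k V : Type*} [Field k] [AddCommGroup V] [Module k V]
    (S : SuperSpace k V) (A : Module.End k V) : k :=
  LinearMap.trace k S.even
      ((Submodule.linearProjOfIsCompl S.even S.odd S.isCompl) ∘ₗ A ∘ₗ S.even.subtype) -
    LinearMap.trace k S.odd
      ((Submodule.linearProjOfIsCompl S.odd S.even S.isCompl.symm) ∘ₗ A ∘ₗ S.odd.subtype)

/-- The endomorphism which is the identity on the even part and `c` times the identity on
the odd part.  For `c = (-1)^{|Z|}` it implements the Koszul sign `(-1)^{|X||Z|}`. -/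
noncomputable def twist {k V : Type*} [Field k] [AddCommGroup V] [Module k V]
    (S : SuperSpace k V) (c : k) : Module.End k V :=
  S.even.subtype ∘ₗ Submodule.linearProjOfIsCompl S.even S.odd S.isCompl +
    c • (S.odd.subtype ∘ₗ Submodule.linearProjOfIsCompl S.odd S.even S.isCompl.symm)

/-- `ξ` belongs to `osp(V,g)` as an element of parity `pξ`:
`g(ξX,Y) + (−1)^{|ξ||X|} g(X,ξY) = 0`. -/
def ospCond {k V : Type*} [Field k] [AddCommGroup V] [Module k V]
    (S : SuperSpace k V) (B : V →ₗ[k] V →ₗ[k] k) (pξ : ZMod 2)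
    (ξ : Module.End k V) : Prop :=
  ∀ (p : ZMod 2) (x y : V), x ∈ S.part p → B (ξ x) y + sg k (pξ * p) * B x (ξ y) = 0


/-! For `Y`, `Z` of the same parity, `str(J ∘ R(JY, Z)) = 2 Ric(R)(Y, Z)`; for different parities
both sides are supertraces of odd endomorphisms and vanish. Supertraces are contractions
`∑ᵢ Φ(dᵢ, bᵢ)` over a pair of `B`-dual families, and such a contraction does not depend on the
dual pair, so it may equally be computed with `(J d, J b)` or with `(b, (-1)^{|·|} d)`. With
`Φ(u, v) = B(R(Y, v) u, Z)`, the first Bianchi identity, pair symmetry and `[R, J] = 0` turn the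
integrand of `str(J ∘ R(JY, Z))` into `-Φ(J d, J b) - Φ(b, (-1)^{|·|} d)`, while
`osp`-antisymmetry turns that of `Ric(R)(Y, Z)` into `-Φ(b, (-1)^{|·|} d)`. -/

theorem ZMod.eq_zero_or_eq_one : ∀ p : ZMod 2, p = 0 ∨ p = 1 := by decide

theorem ZMod.mul_self_eq_self : ∀ p : ZMod 2, p * p = p := by decide

theorem ZMod.add_eq_one_of_ne {p q : ZMod 2} (h : p ≠ q) : p + q = 1 := by
  rcases ZMod.eq_zero_or_eq_one p with rfl | rfl <;>
    rcases ZMod.eq_zero_or_eq_one q with rfl | rfl <;> first | rfl | exact absurd rfl h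

theorem ZMod.add_add_ne_self {p q q' : ZMod 2} (h : q ≠ q') : p + q + q' ≠ p := by
  rwa [add_assoc, ne_eq, add_eq_left, add_eq_zero_iff_eq_neg, CharTwo.neg_eq]

@[simp] theorem sg_zero : sg k 0 = 1 := rfl

@[simp] theorem sg_one : sg k 1 = -1 := rfl

theorem sg_add (p q : ZMod 2) : sg k (p + q) = sg k p * sg k q := by
  rcases ZMod.eq_zero_or_eq_one p with rfl | rfl <;>
    rcases ZMod.eq_zero_or_eq_one q with rfl | rfl <;> simp [CharTwo.add_self_eq_zero]

theorem sg_mul_self (p : ZMod 2) : sg k p * sg k p = 1 := by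
  rcases ZMod.eq_zero_or_eq_one p with rfl | rfl <;> simp

namespace SuperSpace

section

variable (S : SuperSpace k V)

@[simp] theorem part_zero : S.part 0 = S.even := if_pos rfl

@[simp] theorem part_one : S.part 1 = S.odd := if_neg (by decide)

theorem linearMap_ext {W : Type*} [AddCommGroup W] [Module k W] {f g : V →ₗ[k] W}
    (h : ∀ p, ∀ v ∈ S.part p, f v = g v) : f = g :=
  LinearMap.ext fun v => by
    rw [← Submodule.projection_add_projection_eq_self S.isCompl v, map_add, map_add,
      h 0 _ (by simp), h 1 _ (by simp)]

theorem bilin_ext {W : Type*} [AddCommGroup W] [Module k W] {Φ Ψ : V →ₗ[k] V →ₗ[k] W}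
    (h : ∀ p q u v, u ∈ S.part p → v ∈ S.part q → Φ u v = Ψ u v) : Φ = Ψ :=
  S.linearMap_ext fun p u hu => S.linearMap_ext fun q v hv => h p q u v hu hv

theorem twist_eq (c : k) : twist S c =
    S.even.projection S.odd S.isCompl + c • S.odd.projection S.even S.isCompl.symm := rfl

theorem twist_apply_of_mem_even (c : k) {v : V} (hv : v ∈ S.even) : twist S c v = v := by
  simp [twist_eq, Submodule.projection_apply_of_mem_left, hv,
    (Submodule.projection_apply_eq_zero_iff S.isCompl.symm).mpr hv]

theorem twist_apply_of_mem_odd (c : k) {v : V} (hv : v ∈ S.odd) : twist S c v = c • v := by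
  simp [twist_eq, Submodule.projection_apply_of_mem_left, hv,
    (Submodule.projection_apply_eq_zero_iff S.isCompl).mpr hv]

theorem twist_sg_apply {p : ZMod 2} {v : V} (hv : v ∈ S.part p) (q : ZMod 2) :
    twist S (sg k q) v = sg k (p * q) • v := by
  rcases ZMod.eq_zero_or_eq_one p with rfl | rfl
  · simp [S.twist_apply_of_mem_even _ (by simpa using hv)]
  · simp [S.twist_apply_of_mem_odd _ (by simpa using hv)]

theorem twist_neg_one_apply {p : ZMod 2} {v : V} (hv : v ∈ S.part p) :
    twist S (-1) v = sg k p • v := by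
  simpa using S.twist_sg_apply hv 1

theorem twist_neg_one_mul_self : twist S (-1 : k) * twist S (-1) = 1 :=
  S.linearMap_ext fun p v hv => by
    simp [S.twist_neg_one_apply hv, S.twist_neg_one_apply (Submodule.smul_mem _ _ hv), smul_smul,
      sg_mul_self]

theorem strE_eq_trace [FiniteDimensional k V] (M : Module.End k V) :
    strE S M = LinearMap.trace k V (M * twist S (-1)) := by
  simp only [strE, twist_eq, mul_add, mul_smul_comm, map_add, map_smul, Module.End.mul_eq_comp,
    Submodule.projection, ← LinearMap.comp_assoc, LinearMap.trace_comp_comm' _ (M ∘ₗ _)]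
  simp only [LinearMap.comp_assoc, neg_one_smul, sub_eq_add_neg]
  -- `strE` is written with `linearProjOfIsCompl`, an alias of `projectionOnto`
  rfl

end

variable {S : SuperSpace k V}

theorem HomEnd.mul {a b : ZMod 2} {A A' : Module.End k V} (hA : S.HomEnd a A)
    (hA' : S.HomEnd b A') : S.HomEnd (a + b) (A * A') := fun q x hx => by
  simpa [add_comm a, add_assoc] using hA _ _ (hA' q x hx)

theorem HomEnd.apply_mem_of_even {A : Module.End k V} (hA : S.HomEnd 0 A) {q : ZMod 2} {x : V}
    (hx : x ∈ S.part q) : A x ∈ S.part q := by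
  simpa using hA q x hx

variable (S) in
theorem homEnd_twist (c : k) : S.HomEnd 0 (twist S c) := fun q x hx => by
  rcases ZMod.eq_zero_or_eq_one q with rfl | rfl
  · rw [twist_apply_of_mem_even S c (by simpa using hx)]; simpa using hx
  · rw [twist_apply_of_mem_odd S c (by simpa using hx)]; exact Submodule.smul_mem _ _ hx

theorem strE_eq_zero_of_homEnd_one {A : Module.End k V} (hA : S.HomEnd 1 A) : strE S A = 0 := by
  have h0 : ∀ x ∈ S.even, A x ∈ S.odd := fun x hx => by
    have := hA 0 x (by simpa using hx)
    rwa [zero_add, part_one] at this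
  have h1 : ∀ x ∈ S.odd, A x ∈ S.even := fun x hx => by
    have := hA 1 x (by simpa using hx)
    rwa [show (1 + 1 : ZMod 2) = 0 from rfl, part_zero] at this
  have e0 : S.even.projectionOnto S.odd S.isCompl ∘ₗ A ∘ₗ S.even.subtype = 0 :=
    LinearMap.ext fun x => by
      simpa using (Submodule.projectionOnto_apply_eq_zero_iff S.isCompl).mpr (h0 x x.2)
  have e1 : S.odd.projectionOnto S.even S.isCompl.symm ∘ₗ A ∘ₗ S.odd.subtype = 0 :=
    LinearMap.ext fun x => by
      simpa using (Submodule.projectionOnto_apply_eq_zero_iff S.isCompl.symm).mpr (h1 x x.2)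
  change LinearMap.trace k S.even (S.even.projectionOnto S.odd S.isCompl ∘ₗ A ∘ₗ S.even.subtype) -
    LinearMap.trace k S.odd (S.odd.projectionOnto S.even S.isCompl.symm ∘ₗ A ∘ₗ S.odd.subtype) = 0
  rw [e0, e1, map_zero, map_zero, sub_zero]

variable (S) in
def IsSupersymm (B : V →ₗ[k] V →ₗ[k] k) : Prop :=
  ∀ (p q : ZMod 2) (x y : V), x ∈ S.part p → y ∈ S.part q → B x y = sg k (p * q) * B y x

variable (S) in
def IsEvenForm (B : V →ₗ[k] V →ₗ[k] k) : Prop :=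
  (∀ x ∈ S.even, ∀ y ∈ S.odd, B x y = 0) ∧ (∀ x ∈ S.odd, ∀ y ∈ S.even, B x y = 0)

variable {B : V →ₗ[k] V →ₗ[k] k}

theorem IsEvenForm.apply_eq_zero (hB : S.IsEvenForm B) {p q : ZMod 2} {x y : V}
    (hx : x ∈ S.part p) (hy : y ∈ S.part q) (hpq : p ≠ q) : B x y = 0 := by
  rcases ZMod.eq_zero_or_eq_one p with rfl | rfl <;> rcases ZMod.eq_zero_or_eq_one q with rfl | rfl
  · exact absurd rfl hpq
  · exact hB.1 x (by simpa using hx) y (by simpa using hy)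
  · exact hB.2 x (by simpa using hx) y (by simpa using hy)
  · exact absurd rfl hpq

theorem IsSupersymm.apply_eq_apply_twist (hs : S.IsSupersymm B) (he : S.IsEvenForm B)
    (x y : V) : B x y = B y (twist S (-1) x) := by
  suffices B = B.flip ∘ₗ twist S (-1) from LinearMap.congr_fun₂ this x y
  refine S.bilin_ext fun p q x y hx hy => ?_
  rw [LinearMap.comp_apply, LinearMap.flip_apply, twist_neg_one_apply S hx, map_smul,
    smul_eq_mul]
  by_cases hpq : p = q
  · subst hpq
    rw [hs p p x y hx hy, ZMod.mul_self_eq_self]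
  · rw [he.apply_eq_zero hx hy hpq, he.apply_eq_zero hy hx (Ne.symm hpq), mul_zero]


theorem IsSupersymm.separatingRight (hs : S.IsSupersymm B) (he : S.IsEvenForm B)
    (hnd : ∀ x : V, (∀ y, B x y = 0) → x = 0) : B.SeparatingRight := fun y hy =>
  hnd y fun z => by
    have := hs.apply_eq_apply_twist he (twist S (-1) z) y
    rwa [hy, ← Module.End.mul_apply, twist_neg_one_mul_self, Module.End.one_apply,
      eq_comm] at this


end SuperSpace

section DualPair

variable {B : V →ₗ[k] V →ₗ[k] k} {ι κ : Type*} [Fintype ι] [Fintype κ]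

def IsDualPair (B : V →ₗ[k] V →ₗ[k] k) (d b : ι → V) : Prop :=
  (∀ v, ∑ i, B v (b i) • d i = v) ∧ ∀ w, ∑ i, B (d i) w • b i = w

theorem exists_isDualPair [FiniteDimensional k V] (hB : B.Nondegenerate) :
    ∃ (n : ℕ) (d b : Fin n → V), IsDualPair B d b := by
  let b := Module.finBasis k V
  refine ⟨_, LinearMap.BilinForm.dualBasis B hB b, b, fun v => ?_, fun w => ?_⟩
  · simpa using (LinearMap.BilinForm.dualBasis B hB b).sum_repr v
  · conv_rhs => rw [← b.sum_repr w]
    congr! 2 with i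
    conv_lhs => rw [← b.sum_repr w]
    simp only [map_sum, map_smul, smul_eq_mul, LinearMap.BilinForm.apply_dualBasis_left, mul_ite,
      mul_one, mul_zero, Finset.sum_ite_eq', Finset.mem_univ, if_true]

theorem IsDualPair.trace_eq [FiniteDimensional k V] {d b : ι → V} (h : IsDualPair B d b)
    (A : Module.End k V) :
    LinearMap.trace k V A = ∑ i, B (A (d i)) (b i) := by
  have hA : A = ∑ i, (B.flip (b i) ∘ₗ A).smulRight (d i) :=
    LinearMap.ext fun v => by simpa using (h.1 (A v)).symm
  conv_lhs => rw [hA]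
  simp

theorem IsDualPair.sum_eq {d b : ι → V} {d' b' : κ → V} (h : IsDualPair B d b)
    (h' : IsDualPair B d' b') (Φ : V →ₗ[k] V →ₗ[k] k) :
    ∑ i, Φ (d i) (b i) = ∑ j, Φ (d' j) (b' j) := calc
  ∑ i, Φ (d i) (b i) = ∑ i, Φ (∑ j, B (d i) (b' j) • d' j) (b i) := by simp only [h'.1]
  _ = ∑ j, Φ (d' j) (∑ i, B (d i) (b' j) • b i) := by
    simp only [map_sum, map_smul, LinearMap.sum_apply, LinearMap.smul_apply, smul_eq_mul]
    exact Finset.sum_comm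
  _ = ∑ j, Φ (d' j) (b' j) := by simp only [h.2]

theorem IsDualPair.map {d b : ι → V} (h : IsDualPair B d b) {f g : Module.End k V}
    (hfg : f * g = 1) (hf : ∀ x y, B (f x) (f y) = B x y) :
    IsDualPair B (fun i => f (d i)) (fun i => f (b i)) := by
  have hfg' : ∀ v, f (g v) = v := fun v => by simp [← Module.End.mul_apply, hfg]
  refine ⟨fun v => ?_, fun w => ?_⟩
  · conv_rhs => rw [← hfg' v, ← h.1 (g v)]
    simp only [map_sum, map_smul, ← hf (g v), hfg']
  · conv_rhs => rw [← hfg' w, ← h.2 (g w)]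
    simp only [map_sum, map_smul, ← hf _ (g w), hfg']

theorem IsDualPair.swap {d b : ι → V} (h : IsDualPair B d b) {ε : Module.End k V}
    (hε : ε * ε = 1) (hB : ∀ x y, B x y = B y (ε x)) :
    IsDualPair B b (fun i => ε (d i)) := by
  have hεε : ∀ v, ε (ε v) = v := fun v => by simp [← Module.End.mul_apply, hε]
  refine ⟨fun v => ?_, fun w => ?_⟩
  · simpa only [← hB] using h.2 v
  · conv_rhs => rw [← hεε w, ← h.1 (ε w)]
    simp only [map_sum, map_smul, hB (ε w), hεε, hB (b _) w]

theorem IsDualPair.strE_eq [FiniteDimensional k V] {S : SuperSpace k V} {d b : ι → V}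
    (h : IsDualPair B d b) (M : Module.End k V) :
    strE S M = ∑ i, B (M (twist S (-1) (d i))) (b i) := by
  rw [S.strE_eq_trace, h.trace_eq]
  rfl

end DualPair

section Curvature

variable {S : SuperSpace k V} {B : V →ₗ[k] V →ₗ[k] k} {R : V →ₗ[k] V →ₗ[k] Module.End k V}
  {p q r s : ZMod 2} {x y z w : V}

theorem HomCurv.apply_mem (hR : HomCurv S 0 R) (hx : x ∈ S.part p) (hy : y ∈ S.part q)
    (hz : z ∈ S.part r) : R x y z ∈ S.part (p + q + r) := by
  simpa [add_comm r] using hR p q x y hx hy r z hz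

theorem HomCurv.form_eq_zero (hR : HomCurv S 0 R) (he : S.IsEvenForm B) (hx : x ∈ S.part p)
    (hy : y ∈ S.part q) (hz : z ∈ S.part r) (hw : w ∈ S.part s) (h : p + q + r ≠ s) :
    B (R x y z) w = 0 :=
  he.apply_eq_zero (hR.apply_mem hx hy hz) hw h

theorem HomCurv.homEnd_flip (hR : HomCurv S 0 R) (hx : x ∈ S.part p) (hz : z ∈ S.part r) :
    S.HomEnd (p + r) ((R x).flip z) := fun q y hy => by
  simpa [add_comm, add_left_comm] using hR.apply_mem hx hy hz

theorem SuperSkew.form_apply (hskew : SuperSkew S R) (hx : x ∈ S.part p) (hy : y ∈ S.part q)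
    (z w : V) : B (R x y z) w = -(sg k (p * q) * B (R y x z) w) := by
  simp [hskew p q x y hx hy]

theorem Bianchi.form_apply (hB : Bianchi S R) (hx : x ∈ S.part p) (hy : y ∈ S.part q)
    (hz : z ∈ S.part r) (w : V) :
    B (R x y z) w + sg k (p * (q + r)) * B (R y z x) w + sg k (r * (p + q)) * B (R z x y) w
      = 0 := by
  simpa using congrArg (B · w) (hB p q r x y z hx hy hz)

variable (S B R) in
def OspValued : Prop :=
  ∀ (p q : ZMod 2) (x y : V), x ∈ S.part p → y ∈ S.part q → ospCond S B (p + q) (R x y)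

theorem OspValued.form_apply (hosp : OspValued S B R) (hs : S.IsSupersymm B)
    (hR : HomCurv S 0 R) (hx : x ∈ S.part p) (hy : y ∈ S.part q) (hz : z ∈ S.part r)
    (hw : w ∈ S.part s) : B (R x y z) w = -(sg k (r * s) * B (R x y w) z) := by
  have h := hosp p q x y hx hy r z w hz
  rw [hs r _ z _ hz (hR.apply_mem hx hy hw), ← mul_assoc, ← sg_add,
    show (p + q) * r + r * (p + q + s) = r * s + (p + q) * r * 2 by ring,
    show (2 : ZMod 2) = 0 from rfl, mul_zero, add_zero] at h
  linear_combination h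

theorem curvature_pair_symm (h2 : (2 : k) ≠ 0) (hs : S.IsSupersymm B) (hR : HomCurv S 0 R)
    (hskew : SuperSkew S R) (hB : Bianchi S R) (hosp : OspValued S B R)
    (hx : x ∈ S.part p) (hy : y ∈ S.part p) (hz : z ∈ S.part r) (hw : w ∈ S.part r) :
    B (R x y z) w = B (R z w x) y := by
  have b₁ := hB.form_apply (B := B) hx hy hz w
  have b₂ := hB.form_apply (B := B) hy hz hw x
  have b₃ := hB.form_apply (B := B) hz hw hx y
  have b₄ := hB.form_apply (B := B) hw hx hy z
  have s₁ := hskew.form_apply (B := B) hx hz y w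
  have s₂ := hskew.form_apply (B := B) hw hy x z
  have o₁ := hosp.form_apply hs hR hx hy hz hw
  have o₂ := hosp.form_apply hs hR hx hz hy hw
  have o₃ := hosp.form_apply hs hR hy hz hx hw
  have o₄ := hosp.form_apply hs hR hz hw hx hy
  have o₅ := hosp.form_apply hs hR hw hx hz hy
  have o₆ := hosp.form_apply hs hR hw hy hx hz
  refine mul_left_cancel₀ h2 ?_
  -- the classical combination of four Bianchi identities, with Koszul signs
  rcases ZMod.eq_zero_or_eq_one p with hp | hp <;> rcases ZMod.eq_zero_or_eq_one r with hr | hr <;>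
  linear_combination (norm := (simp only [hp, hr, CharTwo.add_self_eq_zero, zero_add, add_zero,
      mul_zero, mul_one, one_mul, sg_zero, sg_one]; ring1))
    b₁ + sg k p * b₂ - b₃ - sg k r * b₄ - sg k (p * r) * s₁ + sg k (p + r) * s₂ + o₁
    + sg k (p * r) * o₂ - sg k (p + p * r) * o₃ - o₄ + sg k (r + p * r) * o₅
    - sg k (p + r) * o₆

end Curvature

section Kahler

variable {S : SuperSpace k V} {B : V →ₗ[k] V →ₗ[k] k} {J : Module.End k V}

theorem apply_left_eq_neg_apply_right (hJ2 : J * J = -1)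
    (hJiso : ∀ x y, B (J x) (J y) = B x y) (x y : V) : B (J x) y = -B x (J y) := by
  rw [← hJiso x (J y), ← Module.End.mul_apply, hJ2]
  simp

variable {R : V →ₗ[k] V →ₗ[k] Module.End k V} {p : ZMod 2} {Y Z : V}

theorem kahler_form_identity (h2 : (2 : k) ≠ 0) (hs : S.IsSupersymm B) (he : S.IsEvenForm B)
    (hJh : S.HomEnd 0 J) (hJ2 : J * J = -1) (hJiso : ∀ x y, B (J x) (J y) = B x y)
    (hR : HomCurv S 0 R) (hskew : SuperSkew S R) (hB : Bianchi S R) (hosp : OspValued S B R)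
    (hcomm : ∀ (p q : ZMod 2) (x y : V), x ∈ S.part p → y ∈ S.part q → R x y * J = J * R x y)
    (hY : Y ∈ S.part p) (hZ : Z ∈ S.part p) (u v : V) :
    B (J (R (J Y) Z (twist S (-1) u))) v =
      -B (R Y (J v) (J u)) Z - B (R Y (twist S (-1) u) v) Z := by
  have hJmem {q x} (hx : x ∈ S.part q) : J x ∈ S.part q := hJh.apply_mem_of_even hx
  have hJskew := apply_left_eq_neg_apply_right hJ2 hJiso
  have hRJ : ∀ {q q' x y} (z : V), x ∈ S.part q → y ∈ S.part q' → R x y (J z) = J (R x y z) :=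
    fun z hx hy => by simpa using LinearMap.congr_fun (hcomm _ _ _ _ hx hy) z
  let Φ : V →ₗ[k] V →ₗ[k] k := LinearMap.compr₂ (R Y) (B.flip Z)
  suffices B ∘ₗ (J * R (J Y) Z * twist S (-1)) =
      -(Φ.flip.compl₁₂ J J) - Φ.compl₁₂ (twist S (-1)) LinearMap.id from
    LinearMap.congr_fun₂ this u v
  refine S.bilin_ext fun q q' u v hu hv => ?_
  simp only [LinearMap.comp_apply, Module.End.mul_apply, LinearMap.sub_apply,
    LinearMap.neg_apply, LinearMap.compl₁₂_apply, LinearMap.flip_apply, LinearMap.id_apply,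
    Φ, LinearMap.compr₂_apply, S.twist_neg_one_apply hu, map_smul, LinearMap.smul_apply,
    smul_eq_mul]
  by_cases hq : q = q'
  · subst hq
    have hσ : sg k q * sg k (q * (q + p)) * sg k (q * p) = 1 := by
      rw [mul_add, ZMod.mul_self_eq_self, sg_add, ← mul_assoc, sg_mul_self, one_mul, sg_mul_self]
    have e₁ := hB.form_apply (B := B) hu (hJmem hv) hY (J Z)
    rw [CharTwo.add_self_eq_zero, mul_zero, sg_zero, one_mul] at e₁
    have e₂ := hskew.form_apply (B := B) (hJmem hv) hY u (J Z)
    calc sg k q * B (J (R (J Y) Z u)) v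
        = -(sg k q * B (R u (J v) (J Y)) Z) := by
          rw [hJskew, curvature_pair_symm h2 hs hR hskew hB hosp (hJmem hY) hZ hu (hJmem hv)]
          ring
      _ = sg k q * B (R u (J v) Y) (J Z) := by rw [hRJ Y hu (hJmem hv), hJskew]; ring
      _ = -(sg k q * sg k (q * (q + p)) * B (R (J v) Y u) (J Z))
            - sg k q * B (R Y u (J v)) (J Z) := by linear_combination sg k q * e₁
      _ = -B (R Y (J v) (J u)) Z - sg k q * B (R Y u v) Z := by
          rw [e₂, hRJ v hY hu, hJiso, ← neg_neg (B (R Y (J v) u) (J Z)), ← hJskew,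
            ← hRJ u hY (hJmem hv)]
          linear_combination -B (R Y (J v) (J u)) Z * hσ
  · have hLHS : B (J (R (J Y) Z u)) v = 0 :=
      he.apply_eq_zero (hJmem (hR.apply_mem (hJmem hY) hZ hu)) hv
        (by rwa [CharTwo.add_self_eq_zero, zero_add])
    rw [hLHS, hR.form_eq_zero he hY (hJmem hv) (hJmem hu) hZ (ZMod.add_add_ne_self (Ne.symm hq)),
      hR.form_eq_zero he hY hu hv hZ (ZMod.add_add_ne_self hq)]
    ring


theorem ricci_form_identity (hs : S.IsSupersymm B) (he : S.IsEvenForm B) (hR : HomCurv S 0 R)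
    (hosp : OspValued S B R) (hY : Y ∈ S.part p) (hZ : Z ∈ S.part p) (u v : V) :
    B (R Y (twist S (sg k p) u) Z) v = -B (R Y u v) Z := by
  suffices B ∘ₗ ((R Y).flip Z ∘ₗ twist S (sg k p)) = -(R Y).compr₂ (B.flip Z) from
    LinearMap.congr_fun₂ this u v
  refine S.bilin_ext fun q q' u v hu hv => ?_
  simp only [LinearMap.comp_apply, LinearMap.flip_apply, LinearMap.neg_apply,
    LinearMap.compr₂_apply, S.twist_sg_apply hu, map_smul, LinearMap.smul_apply, smul_eq_mul]
  by_cases hq : q = q'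
  · subst hq
    rw [hosp.form_apply hs hR hY hu hZ hv, mul_comm p q, mul_neg, ← mul_assoc, sg_mul_self,
      one_mul]
  · rw [he.apply_eq_zero (hR.apply_mem hY hu hZ) hv (by rwa [add_right_comm,
      CharTwo.add_self_eq_zero, zero_add]), hR.form_eq_zero he hY hu hv hZ
      (ZMod.add_add_ne_self hq)]
    ring

theorem strE_kahler_eq_two_mul_ricci [FiniteDimensional k V] (h2 : (2 : k) ≠ 0)
    (hs : S.IsSupersymm B) (he : S.IsEvenForm B) (hnd : ∀ x : V, (∀ y, B x y = 0) → x = 0)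
    (hJh : S.HomEnd 0 J) (hJ2 : J * J = -1) (hJiso : ∀ x y, B (J x) (J y) = B x y)
    (hR : HomCurv S 0 R) (hskew : SuperSkew S R) (hB : Bianchi S R) (hosp : OspValued S B R)
    (hcomm : ∀ (p q : ZMod 2) (x y : V), x ∈ S.part p → y ∈ S.part q → R x y * J = J * R x y)
    (hY : Y ∈ S.part p) (hZ : Z ∈ S.part p) :
    strE S (J * R (J Y) Z) = 2 * strE S (((R Y).flip Z) ∘ₗ twist S (sg k p)) := by
  obtain ⟨n, d, b, hdb⟩ := exists_isDualPair (B := B) ⟨hnd, hs.separatingRight he hnd⟩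
  let Φ : V →ₗ[k] V →ₗ[k] k := ((R Y).compr₂ (B.flip Z)).flip
  have hJ : ∑ i, B (R Y (J (b i)) (J (d i))) Z = ∑ i, Φ (d i) (b i) :=
    (hdb.map (g := -J) (by simp [hJ2]) hJiso).sum_eq hdb Φ
  have hε : ∑ i, B (R Y (twist S (-1) (d i)) (b i)) Z = ∑ i, Φ (d i) (b i) :=
    (hdb.swap S.twist_neg_one_mul_self (hs.apply_eq_apply_twist he)).sum_eq hdb Φ
  simp only [hdb.strE_eq, Module.End.mul_apply, LinearMap.comp_apply, LinearMap.flip_apply,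
    kahler_form_identity h2 hs he hJh hJ2 hJiso hR hskew hB hosp hcomm hY hZ,
    ricci_form_identity hs he hR hosp hY hZ, Finset.sum_sub_distrib, Finset.sum_neg_distrib,
    hJ, hε]
  ring

end Kahler

/-- in the Kähler super setting, an even algebraic curvature tensor `R` of
type `u` takes values in `su = {ξ ∈ u : str(J∘ξ) = 0}` if and only if `Ric(R) = 0`, where
`Ric(R)(Y,Z) = str(X ↦ (−1)^{|X||Z|} R(Y,X)Z)`. -/
theorem su_valued_iff_ricci_flat {k V : Type*} [Field k] [AddCommGroup V] [Module k V]
    [FiniteDimensional k V] (h2 : (2 : k) ≠ 0)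
    (S : SuperSpace k V) (B : V →ₗ[k] V →ₗ[k] k)
    (hsymm : ∀ (p q : ZMod 2) (x y : V), x ∈ S.part p → y ∈ S.part q →
      B x y = sg k (p * q) * B y x)
    (hBeven : (∀ x ∈ S.even, ∀ y ∈ S.odd, B x y = 0) ∧
      (∀ x ∈ S.odd, ∀ y ∈ S.even, B x y = 0))
    (hnd : ∀ x : V, (∀ y, B x y = 0) → x = 0)
    (J : Module.End k V) (hJh : S.HomEnd 0 J) (hJ2 : J * J = -1)
    (hJiso : ∀ x y : V, B (J x) (J y) = B x y)
    (R : V →ₗ[k] V →ₗ[k] Module.End k V)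
    (hskew : SuperSkew S R) (hB : Bianchi S R) (hRhom : HomCurv S 0 R)
    (hRu : ∀ (p q : ZMod 2) (x y : V), x ∈ S.part p → y ∈ S.part q →
      R x y * J = J * R x y ∧ ospCond S B (p + q) (R x y)) :
    (∀ (p q : ZMod 2) (x y : V), x ∈ S.part p → y ∈ S.part q →
        strE S (J * R x y) = 0) ↔
    (∀ (pY pZ : ZMod 2) (Y Z : V), Y ∈ S.part pY → Z ∈ S.part pZ →
        strE S (((R Y).flip Z) ∘ₗ twist S (sg k pZ)) = 0) := by
  have key {p : ZMod 2} {Y Z : V} (hY : Y ∈ S.part p) (hZ : Z ∈ S.part p) :=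
    strE_kahler_eq_two_mul_ricci h2 hsymm hBeven hnd hJh hJ2 hJiso hRhom hskew hB
      (fun p q x y hx hy => (hRu p q x y hx hy).2) (fun p q x y hx hy => (hRu p q x y hx hy).1)
      hY hZ
  have hJmem {q : ZMod 2} {x : V} (hx : x ∈ S.part q) : J x ∈ S.part q :=
    hJh.apply_mem_of_even hx
  constructor
  · intro H pY pZ Y Z hY hZ
    by_cases hp : pY = pZ
    · subst hp
      simpa [h2] using (key hY hZ).symm.trans (H _ _ _ _ (hJmem hY) hZ)
    · refine S.strE_eq_zero_of_homEnd_one ?_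
      simpa [ZMod.add_eq_one_of_ne hp, Module.End.mul_eq_comp] using
        (hRhom.homEnd_flip hY hZ).mul (S.homEnd_twist (sg k pZ))
  · intro H p q x y hx hy
    by_cases hp : p = q
    · subst hp
      have hJx : J (-J x) = x := by simp [← Module.End.mul_apply, hJ2]
      have h := key (neg_mem (hJmem hx)) hy
      rwa [hJx, H _ _ _ _ (neg_mem (hJmem hx)) hy, mul_zero] at h
    · refine S.strE_eq_zero_of_homEnd_one ?_
      simpa [ZMod.add_eq_one_of_ne hp] using hJh.mul (hRhom p q x y hx hy)
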